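/- A CL10-formula G is provable in CL10 if and only if it is provable in CL10°. Concretely: a CL10°-proof of G yields a CL10-proof by replacing in each formula every sequential subformula E₁σ…σ̲E_mσ…σEₙ (with E_m underlined, σ ∈ {△,▽}) by its truncation E_mσ…σEₙ; conversely, a CL10-proof of G yields a CL10°-proof by underlining the head of each sequential subformula and letting Switch and Wait move the underline rather than delete components. -/
import Mathlib


/-- CL10-formulas: elementary-base CL9-formulas (no general atoms), with
binary parallel (∧,∨), choice (⊓,⊔) and sequential (△,▽) connectives;
negation is pushed to atoms (`elit b i` is the atom `i` when `b = true`,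
its negation when `b = false`). -/
inductive Fml10 where
  | top : Fml10
  | bot : Fml10
  | elit : Bool → ℕ → Fml10
  | pand : Fml10 → Fml10 → Fml10
  | por  : Fml10 → Fml10 → Fml10
  | cand : Fml10 → Fml10 → Fml10
  | cor  : Fml10 → Fml10 → Fml10
  | sand : Fml10 → Fml10 → Fml10
  | sor  : Fml10 → Fml10 → Fml10
deriving DecidableEq

namespace Fml10

/-- Surface replacement of one occurrence of `G` by `G'` (not in the scope of
a choice connective, not in the tail of a sequential subformula). -/
inductive SRepl (G G' : Fml10) : Fml10 → Fml10 → Prop where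
  | here : SRepl G G' G G'
  | pandL {A A' B} : SRepl G G' A A' → SRepl G G' (pand A B) (pand A' B)
  | pandR {A B B'} : SRepl G G' B B' → SRepl G G' (pand A B) (pand A B')
  | porL {A A' B} : SRepl G G' A A' → SRepl G G' (por A B) (por A' B)
  | porR {A B B'} : SRepl G G' B B' → SRepl G G' (por A B) (por A B')
  | sandL {A A' B} : SRepl G G' A A' → SRepl G G' (sand A B) (sand A' B)
  | sorL {A A' B} : SRepl G G' A A' → SRepl G G' (sor A B) (sor A' B)

/-- Classical evaluation of the elementarization: sequential subformulas
contribute their head, surface ⊓-subformulas are ⊤, surface ⊔-subformulas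
are ⊥. -/
def eval (v : ℕ → Bool) : Fml10 → Bool
  | top => true
  | bot => false
  | elit b i => if b then v i else !(v i)
  | pand A B => eval v A && eval v B
  | por A B => eval v A || eval v B
  | cand _ _ => true
  | cor _ _ => false
  | sand A _ => eval v A
  | sor A _ => eval v A

/-- Stability: the elementarization is a classical tautology. -/
def Stable (F : Fml10) : Prop := ∀ v : ℕ → Bool, eval v F = true

end Fml10

open Fml10

/-- The proof system CL10 (the elementary-base fragment of CL9: the rules
Wait, Choose and Switch). -/
inductive CL10 : Fml10 → Prop where
  | wait (F : Fml10) (hst : Stable F)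
      (hcand₁ : ∀ A B H, SRepl (cand A B) A F H → CL10 H)
      (hcand₂ : ∀ A B H, SRepl (cand A B) B F H → CL10 H)
      (hsand : ∀ A B H, SRepl (sand A B) B F H → CL10 H) :
      CL10 F
  | choose {F H : Fml10} (A B : Fml10)
      (h : SRepl (cor A B) A F H ∨ SRepl (cor A B) B F H)
      (hp : CL10 H) : CL10 F
  | switch {F H : Fml10} (A B : Fml10)
      (h : SRepl (sor A B) B F H)
      (hp : CL10 H) : CL10 F

/-- CL10°-formulas: CL10-formulas in which every sequential subformula
carries an underline mark: in `sand u A B` (resp. `sor u A B`) the underline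
is on the head `A` when `u = false`, and within the tail `B` when
`u = true`. -/
inductive HFml where
  | top : HFml
  | bot : HFml
  | elit : Bool → ℕ → HFml
  | pand : HFml → HFml → HFml
  | por  : HFml → HFml → HFml
  | cand : HFml → HFml → HFml
  | cor  : HFml → HFml → HFml
  | sand : Bool → HFml → HFml → HFml
  | sor  : Bool → HFml → HFml → HFml
deriving DecidableEq

namespace HFml

/-- Replacement of one active surface occurrence of `G` by `G'`: the
occurrence is not in the scope of a choice connective and, whenever it lies
within a component of a sequential subformula, that component is the
underlined one. -/
inductive HRepl (G G' : HFml) : HFml → HFml → Prop where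
  | here : HRepl G G' G G'
  | pandL {A A' B} : HRepl G G' A A' → HRepl G G' (pand A B) (pand A' B)
  | pandR {A B B'} : HRepl G G' B B' → HRepl G G' (pand A B) (pand A B')
  | porL {A A' B} : HRepl G G' A A' → HRepl G G' (por A B) (por A' B)
  | porR {A B B'} : HRepl G G' B B' → HRepl G G' (por A B) (por A B')
  | sandHead {A A' B} : HRepl G G' A A' → HRepl G G' (sand false A B) (sand false A' B)
  | sandTail {A B B'} : HRepl G G' B B' → HRepl G G' (sand true A B) (sand true A B')
  | sorHead {A A' B} : HRepl G G' A A' → HRepl G G' (sor false A B) (sor false A' B)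
  | sorTail {A B B'} : HRepl G G' B B' → HRepl G G' (sor true A B) (sor true A B')

/-- Classical evaluation of the elementarization of a CL10°-formula: each
sequential subformula contributes its underlined component, surface ⊓ is ⊤,
surface ⊔ is ⊥. -/
def eval (v : ℕ → Bool) : HFml → Bool
  | top => true
  | bot => false
  | elit b i => if b then v i else !(v i)
  | pand A B => eval v A && eval v B
  | por A B => eval v A || eval v B
  | cand _ _ => true
  | cor _ _ => false
  | sand u A B => if u then eval v B else eval v A
  | sor u A B => if u then eval v B else eval v A

/-- Stability of a CL10°-formula. -/
def Stable (F : HFml) : Prop := ∀ v : ℕ → Bool, eval v F = true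

end HFml

open HFml

/-- The proof system CL10°: Wait° (stable conclusion; premises replace active
surface ⊓-subformulas by each conjunct and advance the underline in active
surface △-subformulas), Choose° (pick a disjunct of an active surface
⊔-subformula) and Switch° (advance the underline in an active surface
▽-subformula). -/
inductive CL10h : HFml → Prop where
  | wait (F : HFml) (hst : HFml.Stable F)
      (hcand₁ : ∀ A B H, HRepl (HFml.cand A B) A F H → CL10h H)
      (hcand₂ : ∀ A B H, HRepl (HFml.cand A B) B F H → CL10h H)
      (hsand : ∀ A B H, HRepl (HFml.sand false A B) (HFml.sand true A B) F H → CL10h H) :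
      CL10h F
  | choose {F H : HFml} (A B : HFml)
      (h : HRepl (HFml.cor A B) A F H ∨ HRepl (HFml.cor A B) B F H)
      (hp : CL10h H) : CL10h F
  | switch {F H : HFml} (A B : HFml)
      (h : HRepl (HFml.sor false A B) (HFml.sor true A B) F H)
      (hp : CL10h H) : CL10h F

/-- The dual proof system CL10°-bar: Wait°-bar (instable conclusion; premises
replace active surface ⊔-subformulas by each disjunct and advance the
underline in active surface ▽-subformulas), Choose°-bar (pick a conjunct of
an active surface ⊓-subformula) and Switch°-bar (advance the underline in an
active surface △-subformula). -/
inductive CL10hbar : HFml → Prop where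
  | wait (F : HFml) (hst : ¬ HFml.Stable F)
      (hcor₁ : ∀ A B H, HRepl (HFml.cor A B) A F H → CL10hbar H)
      (hcor₂ : ∀ A B H, HRepl (HFml.cor A B) B F H → CL10hbar H)
      (hsor : ∀ A B H, HRepl (HFml.sor false A B) (HFml.sor true A B) F H → CL10hbar H) :
      CL10hbar F
  | choose {F H : HFml} (A B : HFml)
      (h : HRepl (HFml.cand A B) A F H ∨ HRepl (HFml.cand A B) B F H)
      (hp : CL10hbar H) : CL10hbar F
  | switch {F H : HFml} (A B : HFml)
      (h : HRepl (HFml.sand false A B) (HFml.sand true A B) F H)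
      (hp : CL10hbar H) : CL10hbar F

/-- Reading a CL10-formula as a CL10°-formula by underlining the head of
every sequential subformula. -/
def embed : Fml10 → HFml
  | Fml10.top => HFml.top
  | Fml10.bot => HFml.bot
  | Fml10.elit b i => HFml.elit b i
  | Fml10.pand A B => HFml.pand (embed A) (embed B)
  | Fml10.por A B => HFml.por (embed A) (embed B)
  | Fml10.cand A B => HFml.cand (embed A) (embed B)
  | Fml10.cor A B => HFml.cor (embed A) (embed B)
  | Fml10.sand A B => HFml.sand false (embed A) (embed B)
  | Fml10.sor A B => HFml.sor false (embed A) (embed B)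


/-- Truncation: replace each sequential subformula by the part starting at
the underlined component. -/
def trunc : HFml → Fml10
  | HFml.top => Fml10.top
  | HFml.bot => Fml10.bot
  | HFml.elit b i => Fml10.elit b i
  | HFml.pand A B => Fml10.pand (trunc A) (trunc B)
  | HFml.por A B => Fml10.por (trunc A) (trunc B)
  | HFml.cand A B => Fml10.cand (trunc A) (trunc B)
  | HFml.cor A B => Fml10.cor (trunc A) (trunc B)
  | HFml.sand false A B => Fml10.sand (trunc A) (trunc B)
  | HFml.sand true _ B => trunc B
  | HFml.sor false A B => Fml10.sor (trunc A) (trunc B)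
  | HFml.sor true _ B => trunc B

theorem trunc_embed : ∀ G : Fml10, trunc (embed G) = G := by
  intro G
  induction G <;> simp [embed, trunc, *]

theorem eval_trunc (v : ℕ → Bool) : ∀ F : HFml,
    Fml10.eval v (trunc F) = HFml.eval v F := by
  intro F
  induction F with
  | sand u A B ihA ihB => cases u <;> simp [trunc, Fml10.eval, HFml.eval, ihA, ihB]
  | sor u A B ihA ihB => cases u <;> simp [trunc, Fml10.eval, HFml.eval, ihA, ihB]
  | _ => simp [trunc, Fml10.eval, HFml.eval, *]

theorem projHRepl {G G' F F' : HFml} (h : HRepl G G' F F') :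
    SRepl (trunc G) (trunc G') (trunc F) (trunc F') := by
  induction h with
  | here => exact SRepl.here
  | pandL _ ih => exact SRepl.pandL ih
  | pandR _ ih => exact SRepl.pandR ih
  | porL _ ih => exact SRepl.porL ih
  | porR _ ih => exact SRepl.porR ih
  | sandHead _ ih => exact SRepl.sandL ih
  | sandTail _ ih => exact ih
  | sorHead _ ih => exact SRepl.sorL ih
  | sorTail _ ih => exact ih

/-- `F` has the underline strictly inside its tail at the top level. -/
def TailForm (F : HFml) : Prop :=
  (∃ A B, F = HFml.sand true A B) ∨ (∃ A B, F = HFml.sor true A B)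

theorem liftGen (P : HFml → HFml → Prop) {G G' : Fml10}
    (hbase : ∀ F : HFml, trunc F = G → ¬ TailForm F →
      ∃ Gh', trunc Gh' = G' ∧ P F Gh') :
    ∀ (F : HFml) {H : Fml10}, SRepl G G' (trunc F) H →
      ∃ Gh Gh' F', trunc F' = H ∧ P Gh Gh' ∧ HRepl Gh Gh' F F' := by
  intro F
  induction F with
  | top =>
      intro H h
      cases h
      obtain ⟨Gh', h1, h2⟩ := hbase HFml.top rfl (by simp [TailForm])
      exact ⟨_, _, _, h1, h2, HRepl.here⟩
  | bot =>
      intro H h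
      cases h
      obtain ⟨Gh', h1, h2⟩ := hbase HFml.bot rfl (by simp [TailForm])
      exact ⟨_, _, _, h1, h2, HRepl.here⟩
  | elit b i =>
      intro H h
      cases h
      obtain ⟨Gh', h1, h2⟩ := hbase (HFml.elit b i) rfl (by simp [TailForm])
      exact ⟨_, _, _, h1, h2, HRepl.here⟩
  | pand A B ihA ihB =>
      intro H h
      simp only [trunc] at h
      cases h with
      | here =>
          obtain ⟨Gh', h1, h2⟩ := hbase (HFml.pand A B) rfl (by simp [TailForm])
          exact ⟨_, _, _, h1, h2, HRepl.here⟩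
      | pandL h' =>
          obtain ⟨Gh, Gh', F', h1, h2, h3⟩ := ihA h'
          exact ⟨Gh, Gh', HFml.pand F' B, by simp [trunc, h1], h2, HRepl.pandL h3⟩
      | pandR h' =>
          obtain ⟨Gh, Gh', F', h1, h2, h3⟩ := ihB h'
          exact ⟨Gh, Gh', HFml.pand A F', by simp [trunc, h1], h2, HRepl.pandR h3⟩
  | por A B ihA ihB =>
      intro H h
      simp only [trunc] at h
      cases h with
      | here =>
          obtain ⟨Gh', h1, h2⟩ := hbase (HFml.por A B) rfl (by simp [TailForm])
          exact ⟨_, _, _, h1, h2, HRepl.here⟩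
      | porL h' =>
          obtain ⟨Gh, Gh', F', h1, h2, h3⟩ := ihA h'
          exact ⟨Gh, Gh', HFml.por F' B, by simp [trunc, h1], h2, HRepl.porL h3⟩
      | porR h' =>
          obtain ⟨Gh, Gh', F', h1, h2, h3⟩ := ihB h'
          exact ⟨Gh, Gh', HFml.por A F', by simp [trunc, h1], h2, HRepl.porR h3⟩
  | cand A B ihA ihB =>
      intro H h
      simp only [trunc] at h
      cases h
      obtain ⟨Gh', h1, h2⟩ := hbase (HFml.cand A B) rfl (by simp [TailForm])
      exact ⟨_, _, _, h1, h2, HRepl.here⟩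
  | cor A B ihA ihB =>
      intro H h
      simp only [trunc] at h
      cases h
      obtain ⟨Gh', h1, h2⟩ := hbase (HFml.cor A B) rfl (by simp [TailForm])
      exact ⟨_, _, _, h1, h2, HRepl.here⟩
  | sand u A B ihA ihB =>
      cases u with
      | false =>
          intro H h
          simp only [trunc] at h
          cases h with
          | here =>
              obtain ⟨Gh', h1, h2⟩ := hbase (HFml.sand false A B) rfl
                (by simp [TailForm])
              exact ⟨_, _, _, h1, h2, HRepl.here⟩
          | sandL h' =>
              obtain ⟨Gh, Gh', F', h1, h2, h3⟩ := ihA h'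
              exact ⟨Gh, Gh', HFml.sand false F' B, by simp [trunc, h1], h2,
                HRepl.sandHead h3⟩
      | true =>
          intro H h
          obtain ⟨Gh, Gh', F', h1, h2, h3⟩ := ihB h
          exact ⟨Gh, Gh', HFml.sand true A F', h1, h2, HRepl.sandTail h3⟩
  | sor u A B ihA ihB =>
      cases u with
      | false =>
          intro H h
          simp only [trunc] at h
          cases h with
          | here =>
              obtain ⟨Gh', h1, h2⟩ := hbase (HFml.sor false A B) rfl
                (by simp [TailForm])
              exact ⟨_, _, _, h1, h2, HRepl.here⟩
          | sorL h' =>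
              obtain ⟨Gh, Gh', F', h1, h2, h3⟩ := ihA h'
              exact ⟨Gh, Gh', HFml.sor false F' B, by simp [trunc, h1], h2,
                HRepl.sorHead h3⟩
      | true =>
          intro H h
          obtain ⟨Gh, Gh', F', h1, h2, h3⟩ := ihB h
          exact ⟨Gh, Gh', HFml.sor true A F', h1, h2, HRepl.sorTail h3⟩

theorem trunc_eq_cand {F : HFml} {A B : Fml10} (h : trunc F = Fml10.cand A B)
    (ht : ¬ TailForm F) : ∃ Ah Bh, F = HFml.cand Ah Bh ∧ trunc Ah = A ∧ trunc Bh = B := by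
  cases F with
  | cand Ah Bh => simp only [trunc, Fml10.cand.injEq] at h; exact ⟨Ah, Bh, rfl, h.1, h.2⟩
  | sand u Ah Bh =>
      cases u
      · simp [trunc] at h
      · exact absurd (Or.inl ⟨Ah, Bh, rfl⟩) ht
  | sor u Ah Bh =>
      cases u
      · simp [trunc] at h
      · exact absurd (Or.inr ⟨Ah, Bh, rfl⟩) ht
  | _ => simp_all [trunc]

theorem trunc_eq_cor {F : HFml} {A B : Fml10} (h : trunc F = Fml10.cor A B)
    (ht : ¬ TailForm F) : ∃ Ah Bh, F = HFml.cor Ah Bh ∧ trunc Ah = A ∧ trunc Bh = B := by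
  cases F with
  | cor Ah Bh => simp only [trunc, Fml10.cor.injEq] at h; exact ⟨Ah, Bh, rfl, h.1, h.2⟩
  | sand u Ah Bh =>
      cases u
      · simp [trunc] at h
      · exact absurd (Or.inl ⟨Ah, Bh, rfl⟩) ht
  | sor u Ah Bh =>
      cases u
      · simp [trunc] at h
      · exact absurd (Or.inr ⟨Ah, Bh, rfl⟩) ht
  | _ => simp_all [trunc]

theorem trunc_eq_sand {F : HFml} {A B : Fml10} (h : trunc F = Fml10.sand A B)
    (ht : ¬ TailForm F) :
    ∃ Ah Bh, F = HFml.sand false Ah Bh ∧ trunc Ah = A ∧ trunc Bh = B := by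
  cases F with
  | sand u Ah Bh =>
      cases u
      · simp only [trunc, Fml10.sand.injEq] at h; exact ⟨Ah, Bh, rfl, h.1, h.2⟩
      · exact absurd (Or.inl ⟨Ah, Bh, rfl⟩) ht
  | sor u Ah Bh =>
      cases u
      · simp [trunc] at h
      · exact absurd (Or.inr ⟨Ah, Bh, rfl⟩) ht
  | _ => simp_all [trunc]

theorem trunc_eq_sor {F : HFml} {A B : Fml10} (h : trunc F = Fml10.sor A B)
    (ht : ¬ TailForm F) :
    ∃ Ah Bh, F = HFml.sor false Ah Bh ∧ trunc Ah = A ∧ trunc Bh = B := by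
  cases F with
  | sor u Ah Bh =>
      cases u
      · simp only [trunc, Fml10.sor.injEq] at h; exact ⟨Ah, Bh, rfl, h.1, h.2⟩
      · exact absurd (Or.inr ⟨Ah, Bh, rfl⟩) ht
  | sand u Ah Bh =>
      cases u
      · simp [trunc] at h
      · exact absurd (Or.inl ⟨Ah, Bh, rfl⟩) ht
  | _ => simp_all [trunc]

theorem fromH : ∀ {F : HFml}, CL10h F → CL10 (trunc F) := by
  intro F h
  induction h with
  | wait F hst hcand₁ hcand₂ hsand ih₁ ih₂ ih₃ =>
      apply CL10.wait
      · intro v; rw [eval_trunc]; exact hst v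
      · intro A B H hsr
        obtain ⟨Gh, Gh', F', hF', ⟨Ah, Bh, rfl, rfl⟩, hrepl⟩ :=
          liftGen (fun X Y => ∃ Ah Bh, X = HFml.cand Ah Bh ∧ Y = Ah)
            (fun F₀ h0 ht => by
              obtain ⟨Ah, Bh, rfl, hA, hB⟩ := trunc_eq_cand h0 ht
              exact ⟨Ah, hA, Ah, Bh, rfl, rfl⟩) F hsr
        rw [← hF']; exact ih₁ _ _ _ hrepl
      · intro A B H hsr
        obtain ⟨Gh, Gh', F', hF', ⟨Ah, Bh, rfl, rfl⟩, hrepl⟩ :=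
          liftGen (fun X Y => ∃ Ah Bh, X = HFml.cand Ah Bh ∧ Y = Bh)
            (fun F₀ h0 ht => by
              obtain ⟨Ah, Bh, rfl, hA, hB⟩ := trunc_eq_cand h0 ht
              exact ⟨Bh, hB, Ah, Bh, rfl, rfl⟩) F hsr
        rw [← hF']; exact ih₂ _ _ _ hrepl
      · intro A B H hsr
        obtain ⟨Gh, Gh', F', hF', ⟨Ah, Bh, rfl, rfl⟩, hrepl⟩ :=
          liftGen (fun X Y => ∃ Ah Bh, X = HFml.sand false Ah Bh ∧
              Y = HFml.sand true Ah Bh)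
            (fun F₀ h0 ht => by
              obtain ⟨Ah, Bh, rfl, hA, hB⟩ := trunc_eq_sand h0 ht
              exact ⟨HFml.sand true Ah Bh, hB, Ah, Bh, rfl, rfl⟩) F hsr
        rw [← hF']; exact ih₃ _ _ _ hrepl
  | choose A B hor hp ih =>
      cases hor with
      | inl h' =>
          have hs := projHRepl h'
          simp only [trunc] at hs
          exact CL10.choose _ _ (Or.inl hs) ih
      | inr h' =>
          have hs := projHRepl h'
          simp only [trunc] at hs
          exact CL10.choose _ _ (Or.inr hs) ih
  | switch A B h' hp ih =>
      have hs := projHRepl h'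
      simp only [trunc] at hs
      exact CL10.switch _ _ hs ih

theorem toH : ∀ {K : Fml10}, CL10 K → ∀ F : HFml, trunc F = K → CL10h F := by
  intro K h
  induction h with
  | wait K hst hcand₁ hcand₂ hsand ih₁ ih₂ ih₃ =>
      intro F hF
      apply CL10h.wait
      · intro v; rw [← eval_trunc, hF]; exact hst v
      · intro Ah Bh Hh hr
        have hs := projHRepl hr
        rw [hF] at hs
        simp only [trunc] at hs
        exact ih₁ _ _ _ hs Hh rfl
      · intro Ah Bh Hh hr
        have hs := projHRepl hr
        rw [hF] at hs
        simp only [trunc] at hs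
        exact ih₂ _ _ _ hs Hh rfl
      · intro Ah Bh Hh hr
        have hs := projHRepl hr
        rw [hF] at hs
        simp only [trunc] at hs
        exact ih₃ _ _ _ hs Hh rfl
  | choose A B hor hp ih =>
      intro F hF
      cases hor with
      | inl hsr =>
          rw [← hF] at hsr
          obtain ⟨Gh, Gh', F', hF', ⟨Ah, Bh, hX, hY⟩, hrepl⟩ :=
            liftGen (fun X Y => ∃ Ah Bh, X = HFml.cor Ah Bh ∧ Y = Ah)
              (fun F₀ h0 ht => by
                obtain ⟨Ah, Bh, rfl, hA, hB⟩ := trunc_eq_cor h0 ht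
                exact ⟨Ah, hA, Ah, Bh, rfl, rfl⟩) F hsr
          rw [hX, hY] at hrepl
          exact CL10h.choose Ah Bh (Or.inl hrepl) (ih F' hF')
      | inr hsr =>
          rw [← hF] at hsr
          obtain ⟨Gh, Gh', F', hF', ⟨Ah, Bh, hX, hY⟩, hrepl⟩ :=
            liftGen (fun X Y => ∃ Ah Bh, X = HFml.cor Ah Bh ∧ Y = Bh)
              (fun F₀ h0 ht => by
                obtain ⟨Ah, Bh, rfl, hA, hB⟩ := trunc_eq_cor h0 ht
                exact ⟨Bh, hB, Ah, Bh, rfl, rfl⟩) F hsr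
          rw [hX, hY] at hrepl
          exact CL10h.choose Ah Bh (Or.inr hrepl) (ih F' hF')
  | switch A B hsr hp ih =>
      intro F hF
      rw [← hF] at hsr
      obtain ⟨Gh, Gh', F', hF', ⟨Ah, Bh, hX, hY⟩, hrepl⟩ :=
        liftGen (fun X Y => ∃ Ah Bh, X = HFml.sor false Ah Bh ∧
            Y = HFml.sor true Ah Bh)
          (fun F₀ h0 ht => by
            obtain ⟨Ah, Bh, rfl, hA, hB⟩ := trunc_eq_sor h0 ht
            exact ⟨HFml.sor true Ah Bh, hB, Ah, Bh, rfl, rfl⟩) F hsr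
      rw [hX, hY] at hrepl
      exact CL10h.switch Ah Bh hrepl (ih F' hF')

/-- A CL10-formula G is provable in CL10 iff it is provable in
CL10° (when read as a CL10°-formula with the head of every sequential
subformula underlined). -/
theorem stmt12 (G : Fml10) : CL10 G ↔ CL10h (embed G) := by
  constructor
  · intro h
    exact toH h (embed G) (trunc_embed G)
  · intro h
    have := fromH h
    rwa [trunc_embed] at this
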